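/- arXiv:2412.18808 — 2 statements merged into one kernel-verified Lean document; each statement's English description precedes it below -/
import Mathlib

section
/- For any mixture π ∈ Δ(Δ(Y)) over distributions on a finite label space Y with |Y| = m, the 1-Wasserstein distance (with ℓ1 ground metric) between π and its k-th order projection proj_k(π) is at most m/(2√k), where proj_k(π) is the distribution of the empirical histogram of k i.i.d. labels drawn from a random component p ~ π. -/
/-! Couple `p ~ π` with the empirical distribution of `k` i.i.d. draws from `p` itself. Under this
coupling the first marginal is `π` (for `p` in the simplex) and the second is `proj_k π`. For each
label `y`, `p y - emp y` is an average of `k` independent centered variables of variance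
`p y (1 - p y) ≤ 1/4`, so by Jensen its expected absolute value is at most `1 / (2 √k)`; summing
over the `m` labels bounds the expected `ℓ1` cost of the coupling by `m / (2 √k)`. -/

open MeasureTheory

/-- 1-Wasserstein distance wrt a cost `d`, as the infimum of the expected cost
over all couplings. -/
noncomputable def W1 {α : Type*} [MeasurableSpace α] (d : α → α → ℝ)
    (μ ν : Measure α) : ℝ :=
  sInf {c | ∃ γ : Measure (α × α),
    γ.map Prod.fst = μ ∧ γ.map Prod.snd = ν ∧ c = ∫ q, d q.1 q.2 ∂γ}

/-- ℓ1 distance between two points of the simplex (as vectors). -/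
noncomputable def l1dist {Y : Type*} [Fintype Y] (p q : Y → ℝ) : ℝ :=
  ∑ y, |p y - q y|

/-- The measure on `Y` corresponding to a probability vector `p : Y → ℝ`. -/
noncomputable def measOf {Y : Type*} [Fintype Y] [MeasurableSpace Y] (p : Y → ℝ) :
    Measure Y :=
  ∑ y, ENNReal.ofReal (p y) • Measure.dirac y

/-- The empirical distribution (normalized histogram) of a `k`-tuple of labels. -/
noncomputable def emp {Y : Type*} [Fintype Y] [DecidableEq Y] (k : ℕ)
    (ys : Fin k → Y) : Y → ℝ :=
  fun j => ((Finset.univ.filter fun i => ys i = j).card : ℝ) / k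

/-- The `k`-th order projection of a mixture `π ∈ Δ(Δ(Y))`: draw `p ~ π`, draw `k`
i.i.d. labels from `p`, and output their empirical distribution. -/
noncomputable def projk {Y : Type*} [Fintype Y] [DecidableEq Y] [MeasurableSpace Y]
    [MeasurableSingletonClass Y] (k : ℕ) (π : Measure (Y → ℝ)) : Measure (Y → ℝ) :=
  π.bind fun p => (Measure.pi fun _ : Fin k => measOf p).map (emp k)

open Finset

section SampleMoments

variable {Y : Type*} [Fintype Y] {k : ℕ} {p : Y → ℝ}

lemma measurable_l1dist : Measurable fun q : (Y → ℝ) × (Y → ℝ) => l1dist q.1 q.2 := by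
  unfold l1dist
  fun_prop

lemma l1dist_nonneg (p q : Y → ℝ) : 0 ≤ l1dist p q :=
  sum_nonneg fun _ _ => abs_nonneg _

lemma sum_prod_eq_one (k : ℕ) (hp1 : ∑ z, p z = 1) :
    ∑ ys : Fin k → Y, ∏ i, p (ys i) = 1 := by
  rw [← Fintype.sum_pow, hp1, one_pow]

lemma sum_prod_mul_prod (p : Y → ℝ) (F : Fin k → Y → ℝ) :
    ∑ ys : Fin k → Y, (∏ i, p (ys i)) * ∏ i, F i (ys i) = ∏ i, ∑ z, p z * F i z := by
  rw [Fintype.prod_sum]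
  simp only [prod_mul_distrib]

lemma sum_prod_mul_mul_apply (hp1 : ∑ z, p z = 1) (g : Y → ℝ) (i j : Fin k) :
    ∑ ys : Fin k → Y, (∏ l, p (ys l)) * (g (ys i) * g (ys j))
      = if i = j then ∑ z, p z * g z ^ 2 else (∑ z, p z * g z) ^ 2 := by
  have h_prod : ∀ ys : Fin k → Y, g (ys i) * g (ys j)
      = ∏ l, (if l = i then g (ys l) else 1) * (if l = j then g (ys l) else 1) := by
    intro ys
    rw [prod_mul_distrib, prod_ite_eq', prod_ite_eq']
    simp
  simp_rw [h_prod]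
  rw [sum_prod_mul_prod p fun l z => (if l = i then g z else 1) * (if l = j then g z else 1)]
  split_ifs with hij
  · subst hij
    rw [prod_eq_single_of_mem i (mem_univ i) fun l _ hl => by simp [hl, hp1]]
    simp [sq]
  · have hji : j ∈ univ.erase i := mem_erase.2 ⟨Ne.symm hij, mem_univ j⟩
    rw [← prod_erase_mul _ _ (mem_univ i), ← mul_prod_erase _ _ hji, prod_eq_one fun l hl => by
      simp [(mem_erase.1 (mem_erase.1 hl).2).1, (mem_erase.1 hl).1, hp1]]
    simp [hij, Ne.symm hij, sq]

lemma sum_prod_mul_sq_sum_of_centered (hp1 : ∑ z, p z = 1) (g : Y → ℝ)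
    (hg : ∑ z, p z * g z = 0) :
    ∑ ys : Fin k → Y, (∏ i, p (ys i)) * (∑ i, g (ys i)) ^ 2 = k * ∑ z, p z * g z ^ 2 := by
  calc ∑ ys : Fin k → Y, (∏ i, p (ys i)) * (∑ i, g (ys i)) ^ 2
      = ∑ i, ∑ j, ∑ ys : Fin k → Y, (∏ l, p (ys l)) * (g (ys i) * g (ys j)) := by
        simp_rw [sq, sum_mul_sum, mul_sum]
        rw [sum_comm]
        exact sum_congr rfl fun i _ => sum_comm
    _ = ∑ _i : Fin k, ∑ z, p z * g z ^ 2 := by simp [sum_prod_mul_mul_apply hp1, hg]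
    _ = k * ∑ z, p z * g z ^ 2 := by simp

variable [DecidableEq Y]

lemma sub_emp_eq_sum_div (hk : 0 < k) (ys : Fin k → Y) (y : Y) :
    p y - emp k ys y = (∑ i, (p y - if ys i = y then 1 else 0)) / k := by
  have hk' : (k : ℝ) ≠ 0 := by positivity
  simp only [emp, sum_sub_distrib, sum_const, card_univ, Fintype.card_fin, nsmul_eq_mul, sum_boole]
  field_simp

lemma sum_prod_mul_sq_sub_emp (hk : 0 < k) (hp1 : ∑ z, p z = 1) (y : Y) :
    ∑ ys : Fin k → Y, (∏ i, p (ys i)) * (p y - emp k ys y) ^ 2 = (p y - p y ^ 2) / k := by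
  set g : Y → ℝ := fun z => p y - if z = y then 1 else 0
  have hg : ∑ z, p z * g z = 0 := by simp [g, mul_sub, ← sum_mul, hp1]
  have hg2 : ∑ z, p z * g z ^ 2 = p y - p y ^ 2 := by
    simp only [g, sub_sq, mul_add, mul_sub, sum_add_distrib, sum_sub_distrib]
    simp only [← sum_mul, hp1, one_mul, mul_ite, mul_one, mul_zero, sum_ite_eq', mem_univ,
      if_true, ite_pow, one_pow, ne_eq, OfNat.ofNat_ne_zero, not_false_eq_true, zero_pow]
    ring
  have hk' : (k : ℝ) ≠ 0 := by positivity
  simp_rw [sub_emp_eq_sum_div hk, div_pow, ← mul_div_assoc, ← sum_div]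
  rw [sum_prod_mul_sq_sum_of_centered hp1 g hg, hg2]
  field_simp

lemma sum_prod_mul_abs_sub_emp_le (hk : 0 < k) (hp0 : ∀ z, 0 ≤ p z) (hp1 : ∑ z, p z = 1)
    (y : Y) :
    ∑ ys : Fin k → Y, (∏ i, p (ys i)) * |p y - emp k ys y| ≤ 1 / (2 * Real.sqrt k) := by
  have hW0 : ∀ ys : Fin k → Y, 0 ≤ ∏ i, p (ys i) := fun ys => prod_nonneg fun i _ => hp0 _
  have hk' : (0 : ℝ) < k := by exact_mod_cast hk
  have h_jensen := (convexOn_pow 2).map_sum_le (fun ys _ => hW0 ys) (sum_prod_eq_one k hp1)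
    (fun ys _ => abs_nonneg (p y - emp k ys y))
  simp only [smul_eq_mul, sq_abs, sum_prod_mul_sq_sub_emp hk hp1] at h_jensen
  refine le_of_pow_le_pow_left₀ two_ne_zero (by positivity) (h_jensen.trans ?_)
  rw [div_pow, mul_pow, Real.sq_sqrt hk'.le]
  have : p y - p y ^ 2 ≤ 1 / 4 := by nlinarith [sq_nonneg (p y - 1 / 2)]
  rw [div_le_div_iff₀ hk' (by positivity)]
  nlinarith

lemma sum_prod_mul_l1dist_emp_le (hk : 0 < k) (hp0 : ∀ z, 0 ≤ p z) (hp1 : ∑ z, p z = 1) :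
    ∑ ys : Fin k → Y, (∏ i, p (ys i)) * l1dist p (emp k ys)
      ≤ Fintype.card Y / (2 * Real.sqrt k) := by
  simp_rw [l1dist, mul_sum]
  rw [sum_comm]
  calc ∑ y, ∑ ys : Fin k → Y, (∏ i, p (ys i)) * |p y - emp k ys y|
      ≤ ∑ _y : Y, 1 / (2 * Real.sqrt k) :=
        sum_le_sum fun y _ => sum_prod_mul_abs_sub_emp_le hk hp0 hp1 y
    _ = Fintype.card Y / (2 * Real.sqrt k) := by simp [div_eq_mul_inv]

end SampleMoments

namespace MeasureTheory.Measure

variable {α β δ : Type*} [MeasurableSpace α] [MeasurableSpace β] [MeasurableSpace δ]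

lemma map_bind (μ : Measure α) {κ : α → Measure β} (hκ : Measurable κ) {f : β → δ}
    (hf : Measurable f) : (μ.bind κ).map f = μ.bind fun a => (κ a).map f := by
  rw [bind, bind, ← join_map_map hf, map_map (measurable_map _ hf) hκ]
  rfl

lemma integral_bind_le_of_ae_lintegral_le (μ : Measure α) [IsProbabilityMeasure μ]
    {κ : α → Measure β} (hκ : Measurable κ) {F : β → ℝ} (hF0 : ∀ b, 0 ≤ F b)
    (hF : Measurable F) {C : ℝ} (hC : 0 ≤ C)
    (h : ∀ᵐ a ∂μ, ∫⁻ b, ENNReal.ofReal (F b) ∂κ a ≤ ENNReal.ofReal C) :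
    ∫ b, F b ∂μ.bind κ ≤ C := by
  rw [integral_eq_lintegral_of_nonneg_ae (.of_forall hF0) hF.aestronglyMeasurable]
  refine ENNReal.toReal_le_of_le_ofReal hC ?_
  rw [lintegral_bind hκ.aemeasurable hF.ennreal_ofReal.aemeasurable]
  calc ∫⁻ a, ∫⁻ b, ENNReal.ofReal (F b) ∂κ a ∂μ
      ≤ ∫⁻ _a, ENNReal.ofReal C ∂μ := lintegral_mono_ae h
    _ = ENNReal.ofReal C := by simp

end MeasureTheory.Measure

lemma W1_le_integral_of_coupling {α : Type*} [MeasurableSpace α] {d : α → α → ℝ}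
    (hd : ∀ x y, 0 ≤ d x y) {μ ν : Measure α} {γ : Measure (α × α)}
    (h_fst : γ.map Prod.fst = μ) (h_snd : γ.map Prod.snd = ν) :
    W1 d μ ν ≤ ∫ q, d q.1 q.2 ∂γ :=
  csInf_le ⟨0, fun _ ⟨_, _, _, hc⟩ => hc ▸ integral_nonneg fun q => hd q.1 q.2⟩
    ⟨γ, h_fst, h_snd, rfl⟩

section Coupling

variable {Y : Type*} [Fintype Y] [MeasurableSpace Y]

instance (p : Y → ℝ) : IsFiniteMeasure (measOf p) := by
  constructor
  simp [measOf, ENNReal.sum_lt_top]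

lemma isProbabilityMeasure_measOf {p : Y → ℝ} (hp : p ∈ stdSimplex ℝ Y) :
    IsProbabilityMeasure (measOf p) := by
  constructor
  simp [measOf, ← ENNReal.ofReal_sum_of_nonneg fun y _ => hp.1 y, hp.2]

variable [MeasurableSingletonClass Y]

lemma measOf_singleton (p : Y → ℝ) (y : Y) : measOf p {y} = ENNReal.ofReal (p y) := by
  rw [measOf, Measure.finsetSum_apply, sum_eq_single y (fun x _ hx => by simp [hx]) (by simp)]
  simp

lemma lintegral_pi_measOf (k : ℕ) (p : Y → ℝ) (f : (Fin k → Y) → ENNReal) :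
    ∫⁻ ys, f ys ∂(Measure.pi fun _ => measOf p)
      = ∑ ys, (∏ i, ENNReal.ofReal (p (ys i))) * f ys := by
  rw [lintegral_fintype]
  refine sum_congr rfl fun ys _ => ?_
  rw [mul_comm, ← Set.univ_pi_singleton ys, Measure.pi_pi]
  simp [measOf_singleton]

variable [DecidableEq Y]

noncomputable def empCoupling (k : ℕ) (p : Y → ℝ) : Measure ((Y → ℝ) × (Y → ℝ)) :=
  (Measure.pi fun _ : Fin k => measOf p).map fun ys => (p, emp k ys)

lemma lintegral_empCoupling (k : ℕ) (p : Y → ℝ) {f : (Y → ℝ) × (Y → ℝ) → ENNReal}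
    (hf : Measurable f) :
    ∫⁻ q, f q ∂empCoupling k p
      = ∑ ys, (∏ i, ENNReal.ofReal (p (ys i))) * f (p, emp k ys) := by
  rw [empCoupling, lintegral_map hf (measurable_of_countable _), lintegral_pi_measOf]

lemma measurable_empCoupling (k : ℕ) : Measurable (empCoupling (Y := Y) k) := by
  refine Measure.measurable_of_measurable_coe _ fun s hs => ?_
  simp_rw [← lintegral_indicator_one hs, lintegral_empCoupling k _ (measurable_one.indicator hs)]
  fun_prop

lemma empCoupling_map_fst (k : ℕ) {p : Y → ℝ} (hp : p ∈ stdSimplex ℝ Y) :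
    (empCoupling k p).map Prod.fst = Measure.dirac p := by
  have := isProbabilityMeasure_measOf hp
  rw [empCoupling, Measure.map_map measurable_fst (measurable_of_countable _)]
  simp [Function.comp_def, Measure.map_const]

lemma empCoupling_map_snd (k : ℕ) (p : Y → ℝ) :
    (empCoupling k p).map Prod.snd = (Measure.pi fun _ : Fin k => measOf p).map (emp k) := by
  rw [empCoupling, Measure.map_map measurable_snd (measurable_of_countable _)]
  rfl

lemma lintegral_l1dist_empCoupling_le {k : ℕ} (hk : 0 < k) {p : Y → ℝ}
    (hp : p ∈ stdSimplex ℝ Y) :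
    ∫⁻ q, ENNReal.ofReal (l1dist q.1 q.2) ∂empCoupling k p
      ≤ ENNReal.ofReal (Fintype.card Y / (2 * Real.sqrt k)) := by
  have hW0 : ∀ ys : Fin k → Y, 0 ≤ ∏ i, p (ys i) := fun ys => prod_nonneg fun i _ => hp.1 _
  rw [lintegral_empCoupling k p measurable_l1dist.ennreal_ofReal]
  calc ∑ ys : Fin k → Y,
        (∏ i, ENNReal.ofReal (p (ys i))) * ENNReal.ofReal (l1dist p (emp k ys))
      = ENNReal.ofReal (∑ ys : Fin k → Y, (∏ i, p (ys i)) * l1dist p (emp k ys)) := by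
        rw [ENNReal.ofReal_sum_of_nonneg fun ys _ => mul_nonneg (hW0 ys) (l1dist_nonneg _ _)]
        refine sum_congr rfl fun ys _ => ?_
        rw [ENNReal.ofReal_mul (hW0 ys), ENNReal.ofReal_prod_of_nonneg fun i _ => hp.1 _]
    _ ≤ _ := ENNReal.ofReal_le_ofReal (sum_prod_mul_l1dist_emp_le hk hp.1 hp.2)

end Coupling

/-- For any mixture `π` over distributions on a finite label space `Y`, the
1-Wasserstein distance (ℓ1 ground metric) between `π` and its `k`-th order
projection is at most `|Y| / (2 √k)`. -/
theorem stmt3 {Y : Type*} [Fintype Y] [DecidableEq Y] [MeasurableSpace Y]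
    [MeasurableSingletonClass Y]
    (k : ℕ) (hk : 0 < k)
    (π : Measure (Y → ℝ)) [IsProbabilityMeasure π]
    (hsupp : π (stdSimplex ℝ Y) = 1) :
    W1 l1dist π (projk k π) ≤ (Fintype.card Y : ℝ) / (2 * Real.sqrt k) := by
  have h_simplex : ∀ᵐ p ∂π, p ∈ stdSimplex ℝ Y := by
    rw [ae_mem_iff_measure_eq (isClosed_stdSimplex ℝ Y).measurableSet.nullMeasurableSet,
      hsupp, measure_univ]
  have h_fst : (π.bind (empCoupling k)).map Prod.fst = π := by
    rw [Measure.map_bind π (measurable_empCoupling k) measurable_fst,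
      Measure.bind_congr_right (h_simplex.mono fun p hp => empCoupling_map_fst k hp),
      Measure.bind_dirac]
  have h_snd : (π.bind (empCoupling k)).map Prod.snd = projk k π := by
    simp_rw [Measure.map_bind π (measurable_empCoupling k) measurable_snd, empCoupling_map_snd]
    rfl
  refine (W1_le_integral_of_coupling l1dist_nonneg h_fst h_snd).trans ?_
  exact Measure.integral_bind_le_of_ae_lintegral_le π (measurable_empCoupling k)
    (fun q => l1dist_nonneg q.1 q.2) measurable_l1dist (by positivity)
    (h_simplex.mono fun p hp => lintegral_l1dist_empCoupling_le hk hp)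
end

section
/- The function M_{k,m}(p) = C(pk, m)/C(k, m) (for p ≥ m/k, and 0 otherwise), defined on the grid {0, 1/k, 2/k, ..., 1}, is m-Lipschitz: for all p₁, p₂ in the grid, |M_{k,m}(p₁) − M_{k,m}(p₂)| ≤ m·|p₁ − p₂|. -/
/-- The moment-recovery function `M_{k,m}(q) = C(qk, m)/C(k, m)` for `q ≥ m/k`
on the grid `{0, 1/k, …, 1}`, and `0` otherwise. -/
noncomputable def Mkm (k m : ℕ) (q : ℝ) : ℝ :=
  if (m : ℝ) / k ≤ q then (Nat.choose (Nat.floor (q * k)) m : ℝ) / (Nat.choose k m)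
  else 0

/-! By Pascal's rule the increments `C(l + 1, m + 1) - C(l, m + 1) = C(l, m)` grow with `l`, so for
`l < k = n + 1` each is at most `C(n, m) = (m + 1)/k · C(k, m + 1)`. After dividing by `C(k, m + 1)`,
each grid step of length `1/k` therefore changes `M` by at most `(m + 1)/k`. -/

/-- Below the threshold `q < m/k` the truncation in `Mkm` agrees with `C(i, m) = 0`. -/
lemma Mkm_natCast_div (k m i : ℕ) (hk : 0 < k) :
    Mkm k m ((i : ℝ) / k) = (i.choose m : ℝ) / k.choose m := by
  have hk' : (0 : ℝ) < k := by exact_mod_cast hk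
  have hfloor : ⌊(i : ℝ) / k * k⌋₊ = i := by
    rw [div_mul_cancel₀ _ hk'.ne', Nat.floor_natCast]
  unfold Mkm
  rw [hfloor]
  split_ifs with him
  · rfl
  · rw [div_le_div_iff_of_pos_right hk', Nat.cast_le] at him
    rw [Nat.choose_eq_zero_of_lt (not_le.mp him), Nat.cast_zero, zero_div]

lemma Nat.choose_succ_le_add_mul_choose {n m i j : ℕ} (hji : j ≤ i) (hin : i ≤ n + 1) :
    i.choose (m + 1) ≤ j.choose (m + 1) + (i - j) * n.choose m := by
  induction i, hji using Nat.le_induction with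
  | base => simp
  | succ l hjl ih =>
    have hstep : l.choose m ≤ n.choose m := Nat.choose_le_choose m (by omega)
    rw [Nat.choose_succ_succ', Nat.sub_add_comm hjl, Nat.succ_mul]
    have hprev := ih (by omega)
    omega

lemma choose_div_choose_sub_le {k m i j : ℕ} (hm : 1 ≤ m) (hmk : m ≤ k) (hji : j ≤ i)
    (hik : i ≤ k) :
    (i.choose m : ℝ) / k.choose m - (j.choose m : ℝ) / k.choose m
      ≤ m * ((i : ℝ) / k - (j : ℝ) / k) := by
  obtain ⟨m, rfl⟩ : ∃ m', m = m' + 1 := ⟨m - 1, by omega⟩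
  obtain ⟨n, rfl⟩ : ∃ n, k = n + 1 := ⟨k - 1, by omega⟩
  have hC : (0 : ℝ) < (n + 1).choose (m + 1) := by exact_mod_cast Nat.choose_pos hmk
  have hincr : ((i.choose (m + 1) : ℕ) : ℝ) ≤ j.choose (m + 1) + ((i : ℝ) - j) * n.choose m := by
    rw [← Nat.cast_sub hji]
    exact_mod_cast Nat.choose_succ_le_add_mul_choose (m := m) hji hik
  have hpascal : ((n + 1 : ℕ) : ℝ) * n.choose m = (n + 1).choose (m + 1) * ((m + 1 : ℕ) : ℝ) := by
    exact_mod_cast Nat.add_one_mul_choose_eq n m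
  have hrhs : ((m + 1 : ℕ) : ℝ) * ((i : ℝ) / (n + 1 : ℕ) - (j : ℝ) / (n + 1 : ℕ))
      * (n + 1).choose (m + 1) = ((i : ℝ) - j) * n.choose m := by
    field_simp
    linear_combination (j - i : ℝ) * hpascal
  rw [← sub_div, div_le_iff₀ hC, hrhs]
  linarith

/-- `M_{k,m}` is `m`-Lipschitz on the grid `{0, 1/k, …, 1}`. -/
theorem stmt8 (k m : ℕ) (hm : 1 ≤ m) (hmk : m ≤ k)
    (i j : ℕ) (hi : i ≤ k) (hj : j ≤ k) :
    |Mkm k m ((i : ℝ) / k) - Mkm k m ((j : ℝ) / k)|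
      ≤ (m : ℝ) * |(i : ℝ) / k - (j : ℝ) / k| := by
  wlog hji : j ≤ i generalizing i j
  · rw [abs_sub_comm, abs_sub_comm ((i : ℝ) / k)]
    exact this j i hj hi (by omega)
  have hk : 0 < k := by omega
  rw [Mkm_natCast_div k m i hk, Mkm_natCast_div k m j hk]
  have hM : (j.choose m : ℝ) / k.choose m ≤ (i.choose m : ℝ) / k.choose m := by gcongr
  have hq : (j : ℝ) / k ≤ (i : ℝ) / k := by gcongr
  rw [abs_of_nonneg (sub_nonneg.mpr hM), abs_of_nonneg (sub_nonneg.mpr hq)]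
  exact choose_div_choose_sub_le hm hmk hji hi
end
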